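/- For all integers k ≥ 1 and m ≥ 1, there exist sets Ĉ_1, Ĉ_2 ⊆ ℝ, each of size 2m, such that ψ̂_k(Ĉ_1, Ĉ_2) ≥ m^4. -/

import Mathlib

/-- The effective distance function `D̂_{k,Û}` in dimension `d = 1` (so `ℝ^d = ℝ` and
`e_1 = 1`), on the disjoint union `ℝ ⊔ ℝ` (left summand for points of `Ĉ_1`, right for
`Ĉ_2`): `D̂¹_{k,Û}(ĉ) = |ĉ − û_1| + ((k+1)ĉ + û_2)` on the left and
`D̂²_{k,Û}(ĉ) = |ĉ − û_2| + ((k+1)ĉ + û_1)` on the right. -/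
noncomputable def DhatR (k : ℕ) (U : ℝ × ℝ) : ℝ ⊕ ℝ → ℝ
  | Sum.inl c => dist c U.1 + (((k : ℝ) + 1) * c + U.2)
  | Sum.inr c => dist c U.2 + (((k : ℝ) + 1) * c + U.1)

/-- `Ψ̂_k(Ĉ_1, Ĉ_2)` for `d = 1`: the set of orderings of `Ĉ_1 ⊔ Ĉ_2` (injective
enumerations `σ : Fin n → ℝ ⊕ ℝ`, left components in `Ĉ_1`, right in `Ĉ_2`) along
which `D̂_{k,Û}` is strictly increasing, for some `Û ∈ ℝ × ℝ`. -/
def PsiHatSetR (k n : ℕ) (C₁ C₂ : Finset ℝ) : Set (Fin n → ℝ ⊕ ℝ) :=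
  {σ | Function.Injective σ ∧
    (∀ i, Sum.elim (fun c => c ∈ C₁) (fun c => c ∈ C₂) (σ i)) ∧
    ∃ U : ℝ × ℝ, StrictMono fun i => DhatR k U (σ i)}

/-- `ψ̂_k(Ĉ_1, Ĉ_2) = |Ψ̂_k(Ĉ_1, Ĉ_2)|` for `d = 1`. -/
noncomputable def psiHatR (k : ℕ) (C₁ C₂ : Finset ℝ) : ℕ :=
  Nat.card (PsiHatSetR k (C₁.card + C₂.card) C₁ C₂)

/-- Sorted enumeration of a finset along an injective-on-it function. -/
lemma exists_sorted_enum {n : ℕ} (T : Finset (ℝ ⊕ ℝ)) (hn : T.card = n) (f : ℝ ⊕ ℝ → ℝ)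
    (hf : Set.InjOn f T) :
    ∃ σ : Fin n → ℝ ⊕ ℝ, (∀ i, σ i ∈ T) ∧ StrictMono (fun i => f (σ i)) := by
  have hI : (T.image f).card = n := by
    rw [Finset.card_image_of_injOn hf, hn]
  let e := (T.image f).orderIsoOfFin hI
  have hmem : ∀ i : Fin n, ∃ a ∈ T, f a = (e i : ℝ) := by
    intro i
    exact Finset.mem_image.mp (e i).2
  choose σ hσT hσf using hmem
  refine ⟨σ, hσT, ?_⟩
  intro i j hij
  have : (e i : ℝ) < (e j : ℝ) := by
    exact_mod_cast (e.lt_iff_lt).mpr hij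
  simpa [hσf] using this

/-- If a single enumeration is strictly monotone for two functions, the two functions
induce the same comparisons on `T`. -/
lemma readback {n : ℕ} (T : Finset (ℝ ⊕ ℝ)) (hn : T.card = n) (σ : Fin n → ℝ ⊕ ℝ)
    (hmem : ∀ i, σ i ∈ T) (g g' : ℝ ⊕ ℝ → ℝ)
    (h : StrictMono (fun i => g (σ i))) (h' : StrictMono (fun i => g' (σ i)))
    {a b : ℝ ⊕ ℝ} (ha : a ∈ T) (hb : b ∈ T) : g a < g b ↔ g' a < g' b := by
  have hσinj : Function.Injective σ := by
    intro i j hij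
    by_contra hne
    rcases lt_or_gt_of_ne hne with hlt | hlt
    · exact absurd (congrArg g hij) (ne_of_lt (h hlt))
    · exact absurd (congrArg g hij) (ne_of_gt (h hlt))
  have himg : Finset.image σ Finset.univ = T := by
    apply Finset.eq_of_subset_of_card_le
    · intro x hx
      rcases Finset.mem_image.mp hx with ⟨i, _, rfl⟩
      exact hmem i
    · rw [Finset.card_image_of_injective _ hσinj, Finset.card_univ, Fintype.card_fin, hn]
  obtain ⟨i, _, rfl⟩ := Finset.mem_image.mp (himg ▸ ha)
  obtain ⟨j, _, rfl⟩ := Finset.mem_image.mp (himg ▸ hb)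
  rw [h.lt_iff_lt, h'.lt_iff_lt]

/-- Key counting lemma. -/
lemma psi_ge {ι : Type} [Fintype ι] (k : ℕ) (C₁ C₂ : Finset ℝ) (U : ι → ℝ × ℝ)
    (hinj : ∀ a, Set.InjOn (DhatR k (U a)) ↑(C₁.disjSum C₂))
    (hsep : ∀ a b, a ≠ b → ∃ x y, x ∈ C₁.disjSum C₂ ∧ y ∈ C₁.disjSum C₂ ∧
      DhatR k (U a) x < DhatR k (U a) y ∧ DhatR k (U b) y < DhatR k (U b) x) :
    Fintype.card ι ≤ psiHatR k C₁ C₂ := by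
  classical
  set n := C₁.card + C₂.card with hn
  set T := C₁.disjSum C₂ with hT
  have hTn : T.card = n := Finset.card_disjSum _ _
  have hσ : ∀ a : ι, ∃ σ : Fin n → ℝ ⊕ ℝ, (∀ i, σ i ∈ T) ∧
      StrictMono (fun i => DhatR k (U a) (σ i)) :=
    fun a => exists_sorted_enum T hTn _ (hinj a)
  choose σ hσT hσmono using hσ
  have hσPsi : ∀ a, σ a ∈ PsiHatSetR k n C₁ C₂ := by
    intro a
    refine ⟨?_, ?_, U a, hσmono a⟩
    · intro i j hij
      by_contra hne
      rcases lt_or_gt_of_ne hne with hlt | hlt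
      · exact absurd (congrArg (DhatR k (U a)) hij) (ne_of_lt (hσmono a hlt))
      · exact absurd (congrArg (DhatR k (U a)) hij) (ne_of_gt (hσmono a hlt))
    · intro i
      have := hσT a i
      rcases hx : σ a i with c | c
      · rw [hx] at this
        simpa using Finset.inl_mem_disjSum.mp this
      · rw [hx] at this
        simpa using Finset.inr_mem_disjSum.mp this
  -- finiteness
  have hfin : (PsiHatSetR k n C₁ C₂).Finite := by
    apply Set.Finite.subset (Set.Finite.pi (fun _ : Fin n => T.finite_toSet))
    intro τ hτ
    rw [Set.mem_pi]
    intro i _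
    have := hτ.2.1 i
    rcases hx : τ i with c | c
    · rw [hx] at this
      exact Finset.inl_mem_disjSum.mpr this
    · rw [hx] at this
      exact Finset.inr_mem_disjSum.mpr this
  haveI : Finite (PsiHatSetR k n C₁ C₂) := hfin.to_subtype
  let F : ι → PsiHatSetR k n C₁ C₂ := fun a => ⟨σ a, hσPsi a⟩
  have hF : Function.Injective F := by
    intro a b hab
    by_contra hne
    obtain ⟨x, y, hx, hy, hxy, hyx⟩ := hsep a b hne
    have hσab : σ a = σ b := congrArg Subtype.val hab
    have := readback T hTn (σ a) (hσT a) (DhatR k (U a)) (DhatR k (U b))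
      (hσmono a) (by rw [hσab]; exact hσmono b) hx hy
    exact absurd (this.mp hxy) (not_lt_of_gt hyx)
  calc Fintype.card ι = Nat.card ι := (Nat.card_eq_fintype_card).symm
    _ ≤ Nat.card (PsiHatSetR k n C₁ C₂) := Nat.card_le_card_of_injective F hF
    _ = psiHatR k C₁ C₂ := rfl

lemma D_inl_right (k : ℕ) (U : ℝ × ℝ) {c : ℝ} (h : U.1 ≤ c) :
    DhatR k U (Sum.inl c) = ((k : ℝ) + 2) * c - U.1 + U.2 := by
  simp only [DhatR, Real.dist_eq, abs_of_nonneg (by linarith : (0:ℝ) ≤ c - U.1)]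
  ring

lemma D_inr_right (k : ℕ) (U : ℝ × ℝ) {c : ℝ} (h : U.2 ≤ c) :
    DhatR k U (Sum.inr c) = ((k : ℝ) + 2) * c - U.2 + U.1 := by
  simp only [DhatR, Real.dist_eq, abs_of_nonneg (by linarith : (0:ℝ) ≤ c - U.2)]
  ring

lemma D_inr_left (k : ℕ) (U : ℝ × ℝ) {c : ℝ} (h : c ≤ U.2) :
    DhatR k U (Sum.inr c) = (k : ℝ) * c + U.1 + U.2 := by
  simp only [DhatR, Real.dist_eq, abs_of_nonpos (by linarith : c - U.2 ≤ (0:ℝ))]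
  ring

noncomputable def pX (K s : ℝ) : ℝ := 32*K*s
noncomputable def pD (K N t : ℝ) : ℝ := 64*K^2*(K+2)^2*N^2 + 32*K*t
noncomputable def pY (K N q : ℝ) : ℝ := 32*K^2*(K+2)^2*N^2 + 32*(K+2)*N*q
noncomputable def pW (K N p : ℝ) : ℝ :=
  96*K^2*(K+2)^2*N^2 + 64*K*(K+2)^2*N^2 + 32*K*N*p
noncomputable def w1 (K N a : ℝ) : ℝ :=
  -16*K^3*(K+2)^2*N^2 + 16*K*(K+2)*a - 2*K*(K+2)
noncomputable def w2 (K N a b : ℝ) : ℝ :=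
  w1 K N a + 16*K*(K+2)^4*N^2 + 16*K*(K+2)*b - 2*K*(K+2)


lemma one_le_mul2 {x y : ℝ} (hx : 1 ≤ x) (hy : 1 ≤ y) : 1 ≤ x*y := by nlinarith
lemma one_le_mul3 {x y z : ℝ} (hx : 1 ≤ x) (hy : 1 ≤ y) (hz : 1 ≤ z) : 1 ≤ x*y*z := by
  have := one_le_mul2 hx hy; nlinarith

section Branches
variable {K N a b s t q p : ℝ}

lemma br_X (hK : 1 ≤ K) (hN : 2 ≤ N) (haU : a ≤ -1) (hs : 1 ≤ s) :
    w1 K N a ≤ pX K s := by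
  simp only [w1, pX]
  have hK0 : (0:ℝ) < K := by linarith
  have h1 : 16*K*(K+2)*a ≤ 16*K*(K+2)*(-1) :=
    mul_le_mul_of_nonneg_left haU (by nlinarith)
  have h2 : (0:ℝ) ≤ 16*K^3*(K+2)^2*N^2 := by positivity
  have h3 : 32*K*1 ≤ 32*K*s := mul_le_mul_of_nonneg_left hs (by linarith)
  nlinarith

lemma br_D (hK : 1 ≤ K) (hN : 2 ≤ N) (haU : a ≤ -1) (ht : 1 ≤ t) :
    w1 K N a ≤ pD K N t := by
  simp only [w1, pD]
  have hK0 : (0:ℝ) < K := by linarith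
  have h1 : 16*K*(K+2)*a ≤ 16*K*(K+2)*(-1) :=
    mul_le_mul_of_nonneg_left haU (by nlinarith)
  have h2 : (0:ℝ) ≤ 16*K^3*(K+2)^2*N^2 := by positivity
  have h4 : (0:ℝ) ≤ 64*K^2*(K+2)^2*N^2 := by positivity
  have h3 : 32*K*1 ≤ 32*K*t := mul_le_mul_of_nonneg_left ht (by linarith)
  nlinarith

lemma br_Y (hK : 1 ≤ K) (hN : 2 ≤ N) (haL : -(N^2) ≤ a) (hbL : 1 ≤ b)
    (hq : 1 ≤ q) (hqU : q ≤ N - 1) :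
    pY K N q ≤ w2 K N a b := by
  simp only [pY, w2, w1]
  have hK0 : (0:ℝ) < K := by linarith
  have hN0 : (0:ℝ) < N := by linarith
  have h1 : 16*K*(K+2)*(-(N^2)) ≤ 16*K*(K+2)*a :=
    mul_le_mul_of_nonneg_left haL (by nlinarith)
  have h2 : 16*K*(K+2)*1 ≤ 16*K*(K+2)*b :=
    mul_le_mul_of_nonneg_left hbL (by nlinarith)
  have h3 : 32*(K+2)*N*q ≤ 32*(K+2)*N*(N-1) :=
    mul_le_mul_of_nonneg_left hqU (by nlinarith)
  have hA : (0:ℝ) ≤ 16*K*(K+2)*N^2*(4*(K+2)-1) :=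
    mul_nonneg (mul_nonneg (mul_nonneg (by linarith : (0:ℝ) ≤ 16*K) (by linarith)) (sq_nonneg N)) (by linarith)
  have hKK : (1:ℝ) ≤ K^2*(K+2) := by nlinarith [sq_nonneg (K-1)]
  have hB : (0:ℝ) ≤ 32*(K+2)*N^2*(K^2*(K+2)-1) :=
    mul_nonneg (mul_nonneg (mul_nonneg (by norm_num : (0:ℝ) ≤ 32) (by linarith)) (sq_nonneg N)) (by linarith)
  have hC : (0:ℝ) ≤ 32*(K+2)*N := by nlinarith
  have hD : (0:ℝ) ≤ 12*K*(K+2) := by nlinarith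
  nlinarith

lemma br_W (hK : 1 ≤ K) (hN : 2 ≤ N) (haU : a ≤ -1) (hbU : b ≤ N^2) (hp : 1 ≤ p) :
    w2 K N a b ≤ pW K N p := by
  simp only [pW, w2, w1]
  have hK0 : (0:ℝ) < K := by linarith
  have hN0 : (0:ℝ) < N := by linarith
  have h1 : 16*K*(K+2)*a ≤ 16*K*(K+2)*(-1) :=
    mul_le_mul_of_nonneg_left haU (by nlinarith)
  have h2 : 16*K*(K+2)*b ≤ 16*K*(K+2)*N^2 :=
    mul_le_mul_of_nonneg_left hbU (by nlinarith)
  have h3 : 32*K*N*1 ≤ 32*K*N*p :=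
    mul_le_mul_of_nonneg_left hp (by nlinarith)
  have hKK : (1:ℝ) ≤ 2*K*(K+2) := by nlinarith
  have hA : (0:ℝ) ≤ 16*K*(K+2)*N^2*(2*K*(K+2)-1) :=
    mul_nonneg (mul_nonneg (mul_nonneg (by linarith : (0:ℝ) ≤ 16*K) (by linarith)) (sq_nonneg N)) (by linarith)
  nlinarith

end Branches

noncomputable def UU (K N a b : ℝ) : ℝ × ℝ := (w1 K N a, w2 K N a b)

section Values
variable {k : ℕ} {N a b s t q p : ℝ}

lemma valX (hk : 1 ≤ (k:ℝ)) (hN : 2 ≤ N) (haU : a ≤ -1) (hs : 1 ≤ s) :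
    DhatR k (UU (k:ℝ) N a b) (Sum.inl (pX (k:ℝ) s)) =
      ((k:ℝ)+2) * pX (k:ℝ) s - w1 (k:ℝ) N a + w2 (k:ℝ) N a b := by
  have := D_inl_right k (UU (k:ℝ) N a b) (c := pX (k:ℝ) s)
    (by simpa [UU] using br_X hk hN haU hs)
  simpa [UU] using this

lemma valD (hk : 1 ≤ (k:ℝ)) (hN : 2 ≤ N) (haU : a ≤ -1) (ht : 1 ≤ t) :
    DhatR k (UU (k:ℝ) N a b) (Sum.inl (pD (k:ℝ) N t)) =
      ((k:ℝ)+2) * pD (k:ℝ) N t - w1 (k:ℝ) N a + w2 (k:ℝ) N a b := by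
  have := D_inl_right k (UU (k:ℝ) N a b) (c := pD (k:ℝ) N t)
    (by simpa [UU] using br_D hk hN haU ht)
  simpa [UU] using this

lemma valY (hk : 1 ≤ (k:ℝ)) (hN : 2 ≤ N) (haL : -(N^2) ≤ a) (hbL : 1 ≤ b)
    (hq : 1 ≤ q) (hqU : q ≤ N - 1) :
    DhatR k (UU (k:ℝ) N a b) (Sum.inr (pY (k:ℝ) N q)) =
      (k:ℝ) * pY (k:ℝ) N q + w1 (k:ℝ) N a + w2 (k:ℝ) N a b := by
  have := D_inr_left k (UU (k:ℝ) N a b) (c := pY (k:ℝ) N q)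
    (by simpa [UU] using br_Y hk hN haL hbL hq hqU)
  simpa [UU] using this

lemma valW (hk : 1 ≤ (k:ℝ)) (hN : 2 ≤ N) (haU : a ≤ -1) (hbU : b ≤ N^2) (hp : 1 ≤ p) :
    DhatR k (UU (k:ℝ) N a b) (Sum.inr (pW (k:ℝ) N p)) =
      ((k:ℝ)+2) * pW (k:ℝ) N p - w2 (k:ℝ) N a b + w1 (k:ℝ) N a := by
  have := D_inr_right k (UU (k:ℝ) N a b) (c := pW (k:ℝ) N p)
    (by simpa [UU] using br_W hk hN haU hbU hp)
  simpa [UU] using this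

end Values

section Comparisons
variable {k : ℕ} {N a b s t q p s' t' q' p' : ℝ}

/-- Standard hypothesis bundle shortcut. -/
lemma eq_xx (hk : 1 ≤ (k:ℝ)) (hN : 2 ≤ N) (haU : a ≤ -1) (hs : 1 ≤ s) (hs' : 1 ≤ s')
    (h : DhatR k (UU (k:ℝ) N a b) (Sum.inl (pX (k:ℝ) s)) =
         DhatR k (UU (k:ℝ) N a b) (Sum.inl (pX (k:ℝ) s'))) : s = s' := by
  rw [valX hk hN haU hs, valX hk hN haU hs'] at h
  simp only [pX] at h
  have h2 : 32*(k:ℝ)*((k:ℝ)+2)*(s - s') = 0 := by linear_combination h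
  have hKr : (0:ℝ) < 32*(k:ℝ)*((k:ℝ)+2) := by nlinarith
  rcases mul_eq_zero.mp h2 with h3 | h3
  · linarith
  · linarith

lemma eq_dd (hk : 1 ≤ (k:ℝ)) (hN : 2 ≤ N) (haU : a ≤ -1) (ht : 1 ≤ t) (ht' : 1 ≤ t')
    (h : DhatR k (UU (k:ℝ) N a b) (Sum.inl (pD (k:ℝ) N t)) =
         DhatR k (UU (k:ℝ) N a b) (Sum.inl (pD (k:ℝ) N t'))) : t = t' := by
  rw [valD hk hN haU ht, valD hk hN haU ht'] at h
  simp only [pD] at h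
  have h2 : 32*(k:ℝ)*((k:ℝ)+2)*(t - t') = 0 := by linear_combination h
  have hKr : (0:ℝ) < 32*(k:ℝ)*((k:ℝ)+2) := by nlinarith
  rcases mul_eq_zero.mp h2 with h3 | h3
  · linarith
  · linarith

lemma eq_yy (hk : 1 ≤ (k:ℝ)) (hN : 2 ≤ N) (haL : -(N^2) ≤ a) (hbL : 1 ≤ b)
    (hq : 1 ≤ q) (hqU : q ≤ N - 1) (hq' : 1 ≤ q') (hqU' : q' ≤ N - 1)
    (h : DhatR k (UU (k:ℝ) N a b) (Sum.inr (pY (k:ℝ) N q)) =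
         DhatR k (UU (k:ℝ) N a b) (Sum.inr (pY (k:ℝ) N q'))) : q = q' := by
  rw [valY hk hN haL hbL hq hqU, valY hk hN haL hbL hq' hqU'] at h
  simp only [pY] at h
  have h2 : 32*(k:ℝ)*((k:ℝ)+2)*N*(q - q') = 0 := by linear_combination h
  have hKr : (0:ℝ) < 32*(k:ℝ)*((k:ℝ)+2)*N := by nlinarith
  rcases mul_eq_zero.mp h2 with h3 | h3
  · linarith
  · linarith

lemma eq_ww (hk : 1 ≤ (k:ℝ)) (hN : 2 ≤ N) (haU : a ≤ -1) (hbU : b ≤ N^2)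
    (hp : 1 ≤ p) (hp' : 1 ≤ p')
    (h : DhatR k (UU (k:ℝ) N a b) (Sum.inr (pW (k:ℝ) N p)) =
         DhatR k (UU (k:ℝ) N a b) (Sum.inr (pW (k:ℝ) N p'))) : p = p' := by
  rw [valW hk hN haU hbU hp, valW hk hN haU hbU hp'] at h
  simp only [pW] at h
  have h2 : 32*(k:ℝ)*((k:ℝ)+2)*N*(p - p') = 0 := by linear_combination h
  have hKr : (0:ℝ) < 32*(k:ℝ)*((k:ℝ)+2)*N := by nlinarith
  rcases mul_eq_zero.mp h2 with h3 | h3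
  · linarith
  · linarith

lemma ne_xd (hk : 1 ≤ (k:ℝ)) (hN : 2 ≤ N) (haU : a ≤ -1)
    (hs : 1 ≤ s) (hsU : s ≤ N - 1) (ht : 1 ≤ t) :
    DhatR k (UU (k:ℝ) N a b) (Sum.inl (pX (k:ℝ) s)) ≠
    DhatR k (UU (k:ℝ) N a b) (Sum.inl (pD (k:ℝ) N t)) := by
  intro h
  rw [valX hk hN haU hs, valD hk hN haU ht] at h
  simp only [pX, pD] at h
  set K := (k:ℝ)
  have hK0 : (0:ℝ) < K := by linarith
  have h1 : 32*K*(K+2)*s ≤ 32*K*(K+2)*(N-1) :=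
    mul_le_mul_of_nonneg_left hsU (by nlinarith)
  have h2 : (0:ℝ) ≤ 32*K*(K+2)*t - 32*K*(K+2) :=
    by nlinarith [mul_le_mul_of_nonneg_left ht (by nlinarith : (0:ℝ) ≤ 32*K*(K+2))]
  have h3 : (0:ℝ) ≤ 64*K^2*(K+2)^3*N^2 - 64*K*(K+2)*N := by
    have e1 : (1:ℝ) ≤ K*(K+2)^2*N := by
      have := one_le_mul3 hk (by nlinarith : (1:ℝ) ≤ (K+2)^2) (by linarith : (1:ℝ) ≤ N)
      linarith
    have : (0:ℝ) ≤ 64*K*(K+2)*N*(K*(K+2)^2*N - 1) := by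
      apply mul_nonneg (by nlinarith)
      linarith
    nlinarith
  have h4 : (0:ℝ) < 32*K*(K+2)*N := by nlinarith
  have h5 : (0:ℝ) < K*(K+2) := by nlinarith
  ring_nf at h h1 h2 h3 h4 h5
  linarith

lemma ne_xy (hk : 1 ≤ (k:ℝ)) (hN : 2 ≤ N) (haL : -(N^2) ≤ a) (haU : a ≤ -1) (hbL : 1 ≤ b)
    (hs : 1 ≤ s) (hq : 1 ≤ q) (hqU : q ≤ N - 1)
    (z : ℤ) (hz : (z:ℝ) = s - N*q - a) :
    DhatR k (UU (k:ℝ) N a b) (Sum.inl (pX (k:ℝ) s)) ≠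
    DhatR k (UU (k:ℝ) N a b) (Sum.inr (pY (k:ℝ) N q)) := by
  intro h
  rw [valX hk hN haU hs, valY hk hN haL hbL hq hqU] at h
  simp only [pX, pY, w1, w2] at h
  have h2 : (8*(z:ℝ) + 1) * (4*(k:ℝ)*((k:ℝ)+2)) = 0 := by
    linear_combination h + 32*(k:ℝ)*((k:ℝ)+2)*hz
  rcases mul_eq_zero.mp h2 with h3 | h3
  · have h4 : (8*z + 1 : ℤ) = 0 := by exact_mod_cast h3
    omega
  · nlinarith

lemma ne_dw (hk : 1 ≤ (k:ℝ)) (hN : 2 ≤ N) (haU : a ≤ -1) (hbU : b ≤ N^2)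
    (ht : 1 ≤ t) (hp : 1 ≤ p)
    (z : ℤ) (hz : (z:ℝ) = b - (N*p - t)) :
    DhatR k (UU (k:ℝ) N a b) (Sum.inl (pD (k:ℝ) N t)) ≠
    DhatR k (UU (k:ℝ) N a b) (Sum.inr (pW (k:ℝ) N p)) := by
  intro h
  rw [valD hk hN haU ht, valW hk hN haU hbU hp] at h
  simp only [pD, pW, w1, w2] at h
  have h2 : (8*(z:ℝ) - 1) * (4*(k:ℝ)*((k:ℝ)+2)) = 0 := by
    linear_combination h + 32*(k:ℝ)*((k:ℝ)+2)*hz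
  rcases mul_eq_zero.mp h2 with h3 | h3
  · have h4 : (8*z - 1 : ℤ) = 0 := by exact_mod_cast h3
    omega
  · nlinarith

lemma ne_xw (hk : 1 ≤ (k:ℝ)) (hN : 2 ≤ N) (haU : a ≤ -1) (hbU : b ≤ N^2)
    (hs : 1 ≤ s) (hsU : s ≤ N - 1) (hp : 1 ≤ p) :
    DhatR k (UU (k:ℝ) N a b) (Sum.inl (pX (k:ℝ) s)) ≠
    DhatR k (UU (k:ℝ) N a b) (Sum.inr (pW (k:ℝ) N p)) := by
  intro h
  rw [valX hk hN haU hs, valW hk hN haU hbU hp] at h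
  simp only [pX, pW, w1, w2] at h
  set K := (k:ℝ)
  have hK0 : (0:ℝ) < K := by linarith
  have hKr : (0:ℝ) ≤ 32*K*(K+2) := by nlinarith
  have h1 : 32*K*(K+2)*s ≤ 32*K*(K+2)*(N-1) := mul_le_mul_of_nonneg_left hsU hKr
  have h2 : 32*K*(K+2)*b ≤ 32*K*(K+2)*N^2 := mul_le_mul_of_nonneg_left hbU hKr
  have h3 : 32*K*(K+2)*N ≤ 32*K*(K+2)*(N*p) := by
    have : N*1 ≤ N*p := mul_le_mul_of_nonneg_left hp (by linarith)
    exact mul_le_mul_of_nonneg_left (by linarith) hKr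
  have h4 : (0:ℝ) ≤ 64*K*(K+2)*N^2*(K*(K+2)^2 - 2) :=
    mul_nonneg (mul_nonneg (mul_nonneg (by linarith : (0:ℝ) ≤ 64*K) (by linarith)) (sq_nonneg N))
      (by nlinarith)
  have h5 : (0:ℝ) < K*(K+2) := by nlinarith
  have h6 : (0:ℝ) < 32*K*(K+2)*N := by nlinarith
  have h7 : (0:ℝ) < 32*K*(K+2)*N^2 :=
    mul_pos (mul_pos (by linarith : (0:ℝ) < 32*K) (by linarith : (0:ℝ) < K+2))
      (pow_pos (by linarith : (0:ℝ) < N) 2)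
  ring_nf at h7 h h1 h2 h3 h4 h5 h6
  linarith

lemma ne_dy (hk : 1 ≤ (k:ℝ)) (hN : 2 ≤ N) (haL : -(N^2) ≤ a) (haU : a ≤ -1) (hbL : 1 ≤ b)
    (ht : 1 ≤ t) (hq : 1 ≤ q) (hqU : q ≤ N - 1) :
    DhatR k (UU (k:ℝ) N a b) (Sum.inl (pD (k:ℝ) N t)) ≠
    DhatR k (UU (k:ℝ) N a b) (Sum.inr (pY (k:ℝ) N q)) := by
  intro h
  rw [valD hk hN haU ht, valY hk hN haL hbL hq hqU] at h
  simp only [pD, pY, w1, w2] at h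
  set K := (k:ℝ)
  have hK0 : (0:ℝ) < K := by linarith
  have hKr : (0:ℝ) ≤ 32*K*(K+2) := by nlinarith
  have hNq : N*q ≤ N*(N-1) := mul_le_mul_of_nonneg_left hqU (by linarith)
  have h1 : 32*K*(K+2)*(N*q) ≤ 32*K*(K+2)*(N*(N-1)) := mul_le_mul_of_nonneg_left hNq hKr
  have h2 : 32*K*(K+2)*a ≤ 32*K*(K+2)*(-1) := mul_le_mul_of_nonneg_left haU hKr
  have h3 : 32*K*(K+2)*1 ≤ 32*K*(K+2)*t := mul_le_mul_of_nonneg_left ht hKr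
  have h4 : (0:ℝ) ≤ 32*K*(K+2)*N^2*(2*K*(K+2)^2 - 1) :=
    mul_nonneg (mul_nonneg (mul_nonneg (by linarith : (0:ℝ) ≤ 32*K) (by linarith)) (sq_nonneg N))
      (by nlinarith)
  have h5 : (0:ℝ) < K*(K+2) := by nlinarith
  have h6 : (0:ℝ) < 32*K*(K+2)*N := by nlinarith
  have h7 : (0:ℝ) < 32*K*(K+2)*N^2 :=
    mul_pos (mul_pos (by linarith : (0:ℝ) < 32*K) (by linarith : (0:ℝ) < K+2))
      (pow_pos (by linarith : (0:ℝ) < N) 2)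
  ring_nf at h6 h7 h h1 h2 h3 h4 h5
  linarith

lemma ne_yw (hk : 1 ≤ (k:ℝ)) (hN : 2 ≤ N) (haL : -(N^2) ≤ a) (haU : a ≤ -1)
    (hbL : 1 ≤ b) (hbU : b ≤ N^2)
    (hq : 1 ≤ q) (hqU : q ≤ N - 1) (hp : 1 ≤ p) :
    DhatR k (UU (k:ℝ) N a b) (Sum.inr (pY (k:ℝ) N q)) ≠
    DhatR k (UU (k:ℝ) N a b) (Sum.inr (pW (k:ℝ) N p)) := by
  intro h
  rw [valY hk hN haL hbL hq hqU, valW hk hN haU hbU hp] at h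
  simp only [pY, pW, w1, w2] at h
  set K := (k:ℝ)
  have hK0 : (0:ℝ) < K := by linarith
  have hKr : (0:ℝ) ≤ 32*K*(K+2) := by nlinarith
  have hNq : N*q ≤ N*(N-1) := mul_le_mul_of_nonneg_left hqU (by linarith)
  have h1 : 32*K*(K+2)*(N*q) ≤ 32*K*(K+2)*(N*(N-1)) := mul_le_mul_of_nonneg_left hNq hKr
  have h2 : 32*K*(K+2)*a ≤ 32*K*(K+2)*(-1) := mul_le_mul_of_nonneg_left haU hKr
  have h2b : 32*K*(K+2)*b ≤ 32*K*(K+2)*N^2 := mul_le_mul_of_nonneg_left hbU hKr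
  have h3 : 32*K*(K+2)*N ≤ 32*K*(K+2)*(N*p) := by
    have : N*1 ≤ N*p := mul_le_mul_of_nonneg_left hp (by linarith)
    exact mul_le_mul_of_nonneg_left (by linarith) hKr
  have h4 : (0:ℝ) ≤ 32*K*(K+2)*N^2*(2*K*(K+2)^2 - 2) :=
    mul_nonneg (mul_nonneg (mul_nonneg (by linarith : (0:ℝ) ≤ 32*K) (by linarith)) (sq_nonneg N))
      (by nlinarith)
  have h5 : (0:ℝ) < K*(K+2) := by nlinarith
  have h6 : (0:ℝ) < 32*K*(K+2)*N := by nlinarith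
  have h7 : (0:ℝ) < 32*K*(K+2)*N^2 :=
    mul_pos (mul_pos (by linarith : (0:ℝ) < 32*K) (by linarith : (0:ℝ) < K+2))
      (pow_pos (by linarith : (0:ℝ) < N) 2)
  ring_nf at h7 h h1 h2 h2b h3 h4 h5 h6
  linarith

lemma flipA {a' b' : ℝ} (hk : 1 ≤ (k:ℝ)) (hN : 2 ≤ N)
    (haL : -(N^2) ≤ a) (haU : a ≤ -1) (hbL : 1 ≤ b)
    (haL' : -(N^2) ≤ a') (haU' : a' ≤ -1) (hbL' : 1 ≤ b')
    (hs : 1 ≤ s) (hq : 1 ≤ q) (hqU : q ≤ N - 1)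
    (hz : s - N*q = a) (hlt : a + 1 ≤ a') :
    DhatR k (UU (k:ℝ) N a b) (Sum.inr (pY (k:ℝ) N q)) <
      DhatR k (UU (k:ℝ) N a b) (Sum.inl (pX (k:ℝ) s)) ∧
    DhatR k (UU (k:ℝ) N a' b') (Sum.inl (pX (k:ℝ) s)) <
      DhatR k (UU (k:ℝ) N a' b') (Sum.inr (pY (k:ℝ) N q)) := by
  have hK0 : (0:ℝ) < (k:ℝ) := by linarith
  have hKr : (0:ℝ) ≤ 32*(k:ℝ)*((k:ℝ)+2) := by nlinarith
  have h5 : (0:ℝ) < (k:ℝ)*((k:ℝ)+2) := by nlinarith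
  constructor
  · rw [valX hk hN haU hs, valY hk hN haL hbL hq hqU]
    simp only [pX, pY, w1, w2]
    set K := (k:ℝ)
    have h1 : 32*K*(K+2)*(s - N*q) = 32*K*(K+2)*a := by rw [hz]
    ring_nf at h1 h5 ⊢
    linarith
  · rw [valX hk hN haU' hs, valY hk hN haL' hbL' hq hqU]
    simp only [pX, pY, w1, w2]
    set K := (k:ℝ)
    have h1 : 32*K*(K+2)*(s - N*q) = 32*K*(K+2)*a := by rw [hz]
    have h2 : 32*K*(K+2)*a ≤ 32*K*(K+2)*(a' - 1) :=
      mul_le_mul_of_nonneg_left (by linarith) hKr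
    ring_nf at h1 h2 h5 ⊢
    linarith

lemma flipB {a' b' : ℝ} (hk : 1 ≤ (k:ℝ)) (hN : 2 ≤ N)
    (haU : a ≤ -1) (hbU : b ≤ N^2)
    (haU' : a' ≤ -1) (hbU' : b' ≤ N^2)
    (ht : 1 ≤ t) (hp : 1 ≤ p)
    (hz : N*p - t = b) (hlt : b + 1 ≤ b') :
    DhatR k (UU (k:ℝ) N a b) (Sum.inl (pD (k:ℝ) N t)) <
      DhatR k (UU (k:ℝ) N a b) (Sum.inr (pW (k:ℝ) N p)) ∧
    DhatR k (UU (k:ℝ) N a' b') (Sum.inr (pW (k:ℝ) N p)) <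
      DhatR k (UU (k:ℝ) N a' b') (Sum.inl (pD (k:ℝ) N t)) := by
  have hK0 : (0:ℝ) < (k:ℝ) := by linarith
  have hKr : (0:ℝ) ≤ 32*(k:ℝ)*((k:ℝ)+2) := by nlinarith
  have h5 : (0:ℝ) < (k:ℝ)*((k:ℝ)+2) := by nlinarith
  constructor
  · rw [valD hk hN haU ht, valW hk hN haU hbU hp]
    simp only [pD, pW, w1, w2]
    set K := (k:ℝ)
    have h1 : 32*K*(K+2)*(N*p - t) = 32*K*(K+2)*b := by rw [hz]
    ring_nf at h1 h5 ⊢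
    linarith
  · rw [valD hk hN haU' ht, valW hk hN haU' hbU' hp]
    simp only [pD, pW, w1, w2]
    set K := (k:ℝ)
    have h1 : 32*K*(K+2)*(N*p - t) = 32*K*(K+2)*b := by rw [hz]
    have h2 : 32*K*(K+2)*(b+1) ≤ 32*K*(K+2)*b' :=
      mul_le_mul_of_nonneg_left (by linarith) hKr
    ring_nf at h1 h2 h5 ⊢
    linarith

end Comparisons

/-! ### Instantiation with `Fin m` indices -/

def fv {m : ℕ} (j : Fin m) : ℝ := (j : ℕ) + 1

noncomputable def Av (m : ℕ) (s q : Fin m) : ℝ := fv s - ((m:ℝ)+1) * fv q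
noncomputable def Bv (m : ℕ) (t p : Fin m) : ℝ := ((m:ℝ)+1) * fv p - fv t

def AvZ (m : ℕ) (s q : Fin m) : ℤ := ((s:ℕ):ℤ) + 1 - ((m:ℤ)+1)*(((q:ℕ):ℤ)+1)
def BvZ (m : ℕ) (t p : Fin m) : ℤ := ((m:ℤ)+1)*(((p:ℕ):ℤ)+1) - (((t:ℕ):ℤ)+1)

lemma AvZ_cast {m : ℕ} (s q : Fin m) : ((AvZ m s q : ℤ):ℝ) = Av m s q := by
  simp only [AvZ, Av, fv]
  push_cast
  ring

lemma BvZ_cast {m : ℕ} (t p : Fin m) : ((BvZ m t p : ℤ):ℝ) = Bv m t p := by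
  simp only [BvZ, Bv, fv]
  push_cast
  ring

lemma int_key {m u v u' v' : ℤ} (hu : 0 ≤ u) (huU : u ≤ m - 1) (hu' : 0 ≤ u') (huU' : u' ≤ m - 1)
    (h : u - u' = (m+1)*(v - v')) : v = v' ∧ u = u' := by
  have hv : v = v' := by
    rcases lt_trichotomy v v' with hlt | heq | hlt
    · have h1 : v - v' ≤ -1 := by omega
      have h2 : (m+1)*(v-v') ≤ (m+1)*(-1) := mul_le_mul_of_nonneg_left h1 (by omega)
      linarith
    · exact heq
    · have h1 : 1 ≤ v - v' := by omega
      have h2 : (m+1)*1 ≤ (m+1)*(v-v') := mul_le_mul_of_nonneg_left h1 (by omega)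
      linarith
  subst hv
  simp at h
  exact ⟨rfl, by linarith⟩

lemma AvZ_inj {m : ℕ} {s q s' q' : Fin m} (h : AvZ m s q = AvZ m s' q') :
    s = s' ∧ q = q' := by
  simp only [AvZ] at h
  have hs := s.isLt; have hs' := s'.isLt; have hq := q.isLt; have hq' := q'.isLt
  have hd : ((s:ℕ):ℤ) - ((s':ℕ):ℤ) = ((m:ℤ)+1) * ((((q:ℕ):ℤ)+1) - ((((q':ℕ):ℤ))+1)) := by
    have expand : ((m:ℤ)+1) * ((((q:ℕ):ℤ)+1) - ((((q':ℕ):ℤ))+1)) =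
        ((m:ℤ)+1)*(((q:ℕ):ℤ)+1) - ((m:ℤ)+1)*(((q':ℕ):ℤ)+1) := by ring
    rw [expand]; linarith
  obtain ⟨hv, hu⟩ := int_key (by omega) (by omega) (by omega) (by omega) hd
  exact ⟨by ext; omega, by ext; omega⟩

lemma BvZ_inj {m : ℕ} {t p t' p' : Fin m} (h : BvZ m t p = BvZ m t' p') :
    t = t' ∧ p = p' := by
  simp only [BvZ] at h
  have hs := t.isLt; have hs' := t'.isLt; have hq := p.isLt; have hq' := p'.isLt
  have hd : ((t':ℕ):ℤ) - ((t:ℕ):ℤ) = ((m:ℤ)+1) * ((((p':ℕ):ℤ)+1) - ((((p:ℕ):ℤ))+1)) := by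
    have expand : ((m:ℤ)+1) * ((((p':ℕ):ℤ)+1) - ((((p:ℕ):ℤ))+1)) =
        ((m:ℤ)+1)*(((p':ℕ):ℤ)+1) - ((m:ℤ)+1)*(((p:ℕ):ℤ)+1) := by ring
    rw [expand]; linarith
  obtain ⟨hv, hu⟩ := int_key (by omega) (by omega) (by omega) (by omega) hd
  exact ⟨by ext; omega, by ext; omega⟩

section Bounds
variable {m : ℕ} (hm : 1 ≤ m)

lemma fv_ge1 (j : Fin m) : 1 ≤ fv j := by
  simp only [fv]
  have : (0:ℝ) ≤ ((j:ℕ):ℝ) := Nat.cast_nonneg _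
  linarith

lemma fv_le (j : Fin m) : fv j ≤ ((m:ℝ)+1) - 1 := by
  simp only [fv]
  have hj := j.isLt
  have h2 : ((j:ℕ):ℝ) + 1 ≤ (m:ℝ) := by exact_mod_cast Nat.succ_le_of_lt hj
  linarith

lemma hN_ge {m : ℕ} (hm : 1 ≤ m) : (2:ℝ) ≤ (m:ℝ)+1 := by
  have : (1:ℝ) ≤ (m:ℝ) := by exact_mod_cast hm
  linarith

lemma Av_le (s q : Fin m) : Av m s q ≤ -1 := by
  have h1 := fv_ge1 q
  have h2 := fv_le s
  have hN : (0:ℝ) ≤ (m:ℝ)+1 := by positivity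
  have := mul_le_mul_of_nonneg_left h1 hN
  simp only [Av]
  nlinarith

lemma Av_ge (s q : Fin m) : -(((m:ℝ)+1)^2) ≤ Av m s q := by
  have h1 := fv_ge1 s
  have h2 := fv_le q
  have hN : (0:ℝ) ≤ (m:ℝ)+1 := by positivity
  have := mul_le_mul_of_nonneg_left h2 hN
  simp only [Av]
  nlinarith

lemma Bv_ge (t p : Fin m) : 1 ≤ Bv m t p := by
  have h1 := fv_ge1 p
  have h2 := fv_le t
  have hN : (0:ℝ) ≤ (m:ℝ)+1 := by positivity
  have := mul_le_mul_of_nonneg_left h1 hN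
  simp only [Bv]
  nlinarith

lemma Bv_le (t p : Fin m) : Bv m t p ≤ ((m:ℝ)+1)^2 := by
  have h1 := fv_ge1 t
  have h2 := fv_le p
  have hN : (0:ℝ) ≤ (m:ℝ)+1 := by positivity
  have := mul_le_mul_of_nonneg_left h2 hN
  simp only [Bv]
  nlinarith

end Bounds

noncomputable def C1 (k m : ℕ) : Finset ℝ :=
  (Finset.image (fun s : Fin m => pX (k:ℝ) (fv s)) Finset.univ) ∪
  (Finset.image (fun t : Fin m => pD (k:ℝ) ((m:ℝ)+1) (fv t)) Finset.univ)

noncomputable def C2 (k m : ℕ) : Finset ℝ :=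
  (Finset.image (fun q : Fin m => pY (k:ℝ) ((m:ℝ)+1) (fv q)) Finset.univ) ∪
  (Finset.image (fun p : Fin m => pW (k:ℝ) ((m:ℝ)+1) (fv p)) Finset.univ)

noncomputable def prm (k m : ℕ) (z : Fin m × Fin m × Fin m × Fin m) : ℝ × ℝ :=
  UU (k:ℝ) ((m:ℝ)+1) (Av m z.1 z.2.1) (Bv m z.2.2.1 z.2.2.2)

lemma mem_cases {k m : ℕ} {x : ℝ ⊕ ℝ} (hx : x ∈ (C1 k m).disjSum (C2 k m)) :
    (∃ s : Fin m, x = Sum.inl (pX (k:ℝ) (fv s))) ∨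
    (∃ t : Fin m, x = Sum.inl (pD (k:ℝ) ((m:ℝ)+1) (fv t))) ∨
    (∃ q : Fin m, x = Sum.inr (pY (k:ℝ) ((m:ℝ)+1) (fv q))) ∨
    (∃ p : Fin m, x = Sum.inr (pW (k:ℝ) ((m:ℝ)+1) (fv p))) := by
  rw [Finset.mem_disjSum] at hx
  rcases hx with ⟨c, hc, rfl⟩ | ⟨c, hc, rfl⟩
  · rw [C1, Finset.mem_union] at hc
    rcases hc with hc | hc
    · obtain ⟨s, _, rfl⟩ := Finset.mem_image.mp hc
      exact Or.inl ⟨s, rfl⟩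
    · obtain ⟨t, _, rfl⟩ := Finset.mem_image.mp hc
      exact Or.inr (Or.inl ⟨t, rfl⟩)
  · rw [C2, Finset.mem_union] at hc
    rcases hc with hc | hc
    · obtain ⟨q, _, rfl⟩ := Finset.mem_image.mp hc
      exact Or.inr (Or.inr (Or.inl ⟨q, rfl⟩))
    · obtain ⟨p, _, rfl⟩ := Finset.mem_image.mp hc
      exact Or.inr (Or.inr (Or.inr ⟨p, rfl⟩))

lemma fv_inj {m : ℕ} : Function.Injective (fv (m := m)) := by
  intro i j h
  simp only [fv] at h
  have h2 : ((i:ℕ):ℝ) = ((j:ℕ):ℝ) := by linarith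
  exact Fin.ext (by exact_mod_cast h2)

lemma memX {k m : ℕ} (s : Fin m) :
    Sum.inl (pX (k:ℝ) (fv s)) ∈ (C1 k m).disjSum (C2 k m) :=
  Finset.inl_mem_disjSum.mpr (Finset.mem_union_left _
    (Finset.mem_image.mpr ⟨s, Finset.mem_univ _, rfl⟩))

lemma memD {k m : ℕ} (t : Fin m) :
    Sum.inl (pD (k:ℝ) ((m:ℝ)+1) (fv t)) ∈ (C1 k m).disjSum (C2 k m) :=
  Finset.inl_mem_disjSum.mpr (Finset.mem_union_right _
    (Finset.mem_image.mpr ⟨t, Finset.mem_univ _, rfl⟩))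

lemma memY {k m : ℕ} (q : Fin m) :
    Sum.inr (pY (k:ℝ) ((m:ℝ)+1) (fv q)) ∈ (C1 k m).disjSum (C2 k m) :=
  Finset.inr_mem_disjSum.mpr (Finset.mem_union_left _
    (Finset.mem_image.mpr ⟨q, Finset.mem_univ _, rfl⟩))

lemma memW {k m : ℕ} (p : Fin m) :
    Sum.inr (pW (k:ℝ) ((m:ℝ)+1) (fv p)) ∈ (C1 k m).disjSum (C2 k m) :=
  Finset.inr_mem_disjSum.mpr (Finset.mem_union_right _
    (Finset.mem_image.mpr ⟨p, Finset.mem_univ _, rfl⟩))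

lemma card_C1 {k m : ℕ} (hk : 1 ≤ k) : (C1 k m).card = 2 * m := by
  have hK : (1:ℝ) ≤ (k:ℝ) := by exact_mod_cast hk
  have hK0 : (0:ℝ) < (k:ℝ) := by linarith
  rw [C1, Finset.card_union_of_disjoint, Finset.card_image_of_injective,
    Finset.card_image_of_injective, Finset.card_univ, Fintype.card_fin]
  · ring
  · intro i j h
    simp only [pD] at h
    apply fv_inj
    have h2 : 32*(k:ℝ)*(fv i) = 32*(k:ℝ)*(fv j) := by linarith
    exact mul_left_cancel₀ (by nlinarith : (32*(k:ℝ)) ≠ 0) h2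
  · intro i j h
    simp only [pX] at h
    apply fv_inj
    exact mul_left_cancel₀ (by nlinarith : (32*(k:ℝ)) ≠ 0) h
  · rw [Finset.disjoint_left]
    rintro c hc hc'
    obtain ⟨s, _, rfl⟩ := Finset.mem_image.mp hc
    obtain ⟨t, _, ht⟩ := Finset.mem_image.mp hc'
    have h1 := fv_ge1 s
    have h2 := fv_le s
    have h3 := fv_ge1 t
    have hNge : (1:ℝ) ≤ (m:ℝ)+1 := by linarith [Nat.cast_nonneg (α := ℝ) m]
    simp only [pX, pD] at ht
    have e1 : (1:ℝ) ≤ 2*(k:ℝ)*((k:ℝ)+2)^2*((m:ℝ)+1) := by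
      have := one_le_mul3 (one_le_mul2 (by linarith : (1:ℝ) ≤ 2*(k:ℝ))
        (by nlinarith : (1:ℝ) ≤ ((k:ℝ)+2)^2)) hNge (le_refl 1)
      nlinarith
    have e2 : (0:ℝ) ≤ 32*(k:ℝ)*((m:ℝ)+1)*(2*(k:ℝ)*((k:ℝ)+2)^2*((m:ℝ)+1) - 1) :=
      mul_nonneg (by nlinarith) (by linarith)
    have e3 : 32*(k:ℝ)*(fv s) ≤ 32*(k:ℝ)*((m:ℝ)+1-1) :=
      mul_le_mul_of_nonneg_left h2 (by nlinarith)
    have e4 : 32*(k:ℝ)*1 ≤ 32*(k:ℝ)*(fv t) :=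
      mul_le_mul_of_nonneg_left h3 (by nlinarith)
    ring_nf at ht e2 e3 e4
    linarith

lemma card_C2 {k m : ℕ} (hk : 1 ≤ k) : (C2 k m).card = 2 * m := by
  have hK : (1:ℝ) ≤ (k:ℝ) := by exact_mod_cast hk
  have hK0 : (0:ℝ) < (k:ℝ) := by linarith
  have hN0 : (0:ℝ) < (m:ℝ)+1 := by positivity
  rw [C2, Finset.card_union_of_disjoint, Finset.card_image_of_injective,
    Finset.card_image_of_injective, Finset.card_univ, Fintype.card_fin]
  · ring
  · intro i j h
    simp only [pW] at h
    apply fv_inj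
    have h2 : 32*(k:ℝ)*((m:ℝ)+1)*(fv i) = 32*(k:ℝ)*((m:ℝ)+1)*(fv j) := by linarith
    have h3 : (0:ℝ) < 32*(k:ℝ)*((m:ℝ)+1) := by positivity
    exact mul_left_cancel₀ (ne_of_gt h3) h2
  · intro i j h
    simp only [pY] at h
    apply fv_inj
    have h2 : 32*((k:ℝ)+2)*((m:ℝ)+1)*(fv i) = 32*((k:ℝ)+2)*((m:ℝ)+1)*(fv j) := by linarith
    have h3 : (0:ℝ) < 32*((k:ℝ)+2)*((m:ℝ)+1) := by positivity
    exact mul_left_cancel₀ (ne_of_gt h3) h2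
  · rw [Finset.disjoint_left]
    rintro c hc hc'
    obtain ⟨s, _, rfl⟩ := Finset.mem_image.mp hc
    obtain ⟨t, _, ht⟩ := Finset.mem_image.mp hc'
    have h1 := fv_ge1 s
    have h2 := fv_le s
    have h3 := fv_ge1 t
    simp only [pY, pW] at ht
    have hNge : (1:ℝ) ≤ (m:ℝ)+1 := by linarith [Nat.cast_nonneg (α := ℝ) m]
    have f1 : (0:ℝ) ≤ 32*((k:ℝ)+2)*((m:ℝ)+1)^2*(2*(k:ℝ)*((k:ℝ)+2) - 1) :=
      mul_nonneg (mul_nonneg (by linarith : (0:ℝ) ≤ 32*((k:ℝ)+2)) (sq_nonneg _))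
        (by nlinarith)
    have f2 : 32*((k:ℝ)+2)*((m:ℝ)+1)*(fv s) ≤ 32*((k:ℝ)+2)*((m:ℝ)+1)*((m:ℝ)+1-1) :=
      mul_le_mul_of_nonneg_left h2 (by nlinarith)
    have f3 : 32*(k:ℝ)*((m:ℝ)+1)*1 ≤ 32*(k:ℝ)*((m:ℝ)+1)*(fv t) :=
      mul_le_mul_of_nonneg_left h3 (by nlinarith)
    have f4 : (0:ℝ) ≤ 64*(k:ℝ)^2*((k:ℝ)+2)^2*((m:ℝ)+1)^2 := by positivity
    have f5 : (0:ℝ) < 32*(k:ℝ)*((m:ℝ)+1) := by nlinarith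
    have f6 : (0:ℝ) ≤ 32*((k:ℝ)+2)*((m:ℝ)+1) := by nlinarith
    ring_nf at ht f1 f2 f3 f4 f5 f6
    linarith

lemma hinj_all (k m : ℕ) (hk : 1 ≤ k) (hm : 1 ≤ m) (z : Fin m × Fin m × Fin m × Fin m) :
    Set.InjOn (DhatR k (prm k m z)) ↑((C1 k m).disjSum (C2 k m)) := by
  obtain ⟨s, q, t, p⟩ := z
  intro x hx y hy h
  have hkR : (1:ℝ) ≤ (k:ℝ) := by exact_mod_cast hk
  have hN := hN_ge hm
  have haL := Av_ge s q
  have haU := Av_le s q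
  have hbL := Bv_ge t p
  have hbU := Bv_le t p
  rw [Finset.mem_coe] at hx hy
  simp only [prm] at h
  rcases mem_cases hx with ⟨s₀, rfl⟩ | ⟨t₀, rfl⟩ | ⟨q₀, rfl⟩ | ⟨p₀, rfl⟩ <;>
    rcases mem_cases hy with ⟨s₁, rfl⟩ | ⟨t₁, rfl⟩ | ⟨q₁, rfl⟩ | ⟨p₁, rfl⟩
  · rw [eq_xx hkR hN haU (fv_ge1 s₀) (fv_ge1 s₁) h]
  · exact absurd h (ne_xd hkR hN haU (fv_ge1 s₀) (fv_le s₀) (fv_ge1 t₁))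
  · exact absurd h (ne_xy hkR hN haL haU hbL (fv_ge1 s₀) (fv_ge1 q₁) (fv_le q₁)
      (AvZ m s₀ q₁ - AvZ m s q) (by push_cast [AvZ_cast]; simp only [Av]; try ring))
  · exact absurd h (ne_xw hkR hN haU hbU (fv_ge1 s₀) (fv_le s₀) (fv_ge1 p₁))
  · exact absurd h.symm (ne_xd hkR hN haU (fv_ge1 s₁) (fv_le s₁) (fv_ge1 t₀))
  · rw [eq_dd hkR hN haU (fv_ge1 t₀) (fv_ge1 t₁) h]
  · exact absurd h (ne_dy hkR hN haL haU hbL (fv_ge1 t₀) (fv_ge1 q₁) (fv_le q₁))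
  · exact absurd h (ne_dw hkR hN haU hbU (fv_ge1 t₀) (fv_ge1 p₁)
      (BvZ m t p - BvZ m t₀ p₁) (by push_cast [BvZ_cast]; simp only [Bv]; try ring))
  · exact absurd h.symm (ne_xy hkR hN haL haU hbL (fv_ge1 s₁) (fv_ge1 q₀) (fv_le q₀)
      (AvZ m s₁ q₀ - AvZ m s q) (by push_cast [AvZ_cast]; simp only [Av]; try ring))
  · exact absurd h.symm (ne_dy hkR hN haL haU hbL (fv_ge1 t₁) (fv_ge1 q₀) (fv_le q₀))
  · rw [eq_yy hkR hN haL hbL (fv_ge1 q₀) (fv_le q₀) (fv_ge1 q₁) (fv_le q₁) h]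
  · exact absurd h (ne_yw hkR hN haL haU hbL hbU (fv_ge1 q₀) (fv_le q₀) (fv_ge1 p₁))
  · exact absurd h.symm (ne_xw hkR hN haU hbU (fv_ge1 s₁) (fv_le s₁) (fv_ge1 p₀))
  · exact absurd h.symm (ne_dw hkR hN haU hbU (fv_ge1 t₁) (fv_ge1 p₀)
      (BvZ m t p - BvZ m t₁ p₀) (by push_cast [BvZ_cast]; simp only [Bv]; try ring))
  · exact absurd h.symm (ne_yw hkR hN haL haU hbL hbU (fv_ge1 q₁) (fv_le q₁) (fv_ge1 p₀))
  · rw [eq_ww hkR hN haU hbU (fv_ge1 p₀) (fv_ge1 p₁) h]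

lemma hsep_all (k m : ℕ) (hk : 1 ≤ k) (hm : 1 ≤ m) :
    ∀ z z' : Fin m × Fin m × Fin m × Fin m, z ≠ z' →
    ∃ x y, x ∈ (C1 k m).disjSum (C2 k m) ∧ y ∈ (C1 k m).disjSum (C2 k m) ∧
      DhatR k (prm k m z) x < DhatR k (prm k m z) y ∧
      DhatR k (prm k m z') y < DhatR k (prm k m z') x := by
  rintro ⟨s, q, t, p⟩ ⟨s', q', t', p'⟩ hne
  have hkR : (1:ℝ) ≤ (k:ℝ) := by exact_mod_cast hk
  have hN := hN_ge hm
  by_cases hA : AvZ m s q = AvZ m s' q'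
  · obtain ⟨hs, hq⟩ := AvZ_inj hA
    subst hs; subst hq
    have hB : BvZ m t p ≠ BvZ m t' p' := by
      intro hB
      obtain ⟨ht, hp⟩ := BvZ_inj hB
      subst ht; subst hp
      exact hne rfl
    rcases lt_or_gt_of_ne hB with hlt | hlt
    · have hcast : Bv m t p + 1 ≤ Bv m t' p' := by
        rw [← BvZ_cast, ← BvZ_cast]
        exact_mod_cast Int.add_one_le_iff.mpr hlt
      obtain ⟨h1, h2⟩ := flipB (k := k) (N := (m:ℝ)+1) (a := Av m s q) (b := Bv m t p)
        (a' := Av m s q) (b' := Bv m t' p') hkR hN (Av_le s q) (Bv_le t p)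
        (Av_le s q) (Bv_le t' p') (fv_ge1 t) (fv_ge1 p) rfl hcast
      exact ⟨Sum.inl (pD (k:ℝ) ((m:ℝ)+1) (fv t)), Sum.inr (pW (k:ℝ) ((m:ℝ)+1) (fv p)),
        memD t, memW p, by simpa only [prm] using h1, by simpa only [prm] using h2⟩
    · have hcast : Bv m t' p' + 1 ≤ Bv m t p := by
        rw [← BvZ_cast, ← BvZ_cast]
        exact_mod_cast Int.add_one_le_iff.mpr hlt
      obtain ⟨h1, h2⟩ := flipB (k := k) (N := (m:ℝ)+1) (a := Av m s q) (b := Bv m t' p')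
        (a' := Av m s q) (b' := Bv m t p) hkR hN (Av_le s q) (Bv_le t' p')
        (Av_le s q) (Bv_le t p) (fv_ge1 t') (fv_ge1 p') rfl hcast
      exact ⟨Sum.inr (pW (k:ℝ) ((m:ℝ)+1) (fv p')), Sum.inl (pD (k:ℝ) ((m:ℝ)+1) (fv t')),
        memW p', memD t', by simpa only [prm] using h2, by simpa only [prm] using h1⟩
  · rcases lt_or_gt_of_ne hA with hlt | hlt
    · have hcast : Av m s q + 1 ≤ Av m s' q' := by
        rw [← AvZ_cast, ← AvZ_cast]
        exact_mod_cast Int.add_one_le_iff.mpr hlt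
      obtain ⟨h1, h2⟩ := flipA (k := k) (N := (m:ℝ)+1) (a := Av m s q) (b := Bv m t p)
        (a' := Av m s' q') (b' := Bv m t' p') hkR hN (Av_ge s q) (Av_le s q) (Bv_ge t p)
        (Av_ge s' q') (Av_le s' q') (Bv_ge t' p') (fv_ge1 s) (fv_ge1 q) (fv_le q) rfl hcast
      exact ⟨Sum.inr (pY (k:ℝ) ((m:ℝ)+1) (fv q)), Sum.inl (pX (k:ℝ) (fv s)),
        memY q, memX s, by simpa only [prm] using h1, by simpa only [prm] using h2⟩
    · have hcast : Av m s' q' + 1 ≤ Av m s q := by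
        rw [← AvZ_cast, ← AvZ_cast]
        exact_mod_cast Int.add_one_le_iff.mpr hlt
      obtain ⟨h1, h2⟩ := flipA (k := k) (N := (m:ℝ)+1) (a := Av m s' q') (b := Bv m t' p')
        (a' := Av m s q) (b' := Bv m t p) hkR hN (Av_ge s' q') (Av_le s' q') (Bv_ge t' p')
        (Av_ge s q) (Av_le s q) (Bv_ge t p) (fv_ge1 s') (fv_ge1 q') (fv_le q') rfl hcast
      exact ⟨Sum.inl (pX (k:ℝ) (fv s')), Sum.inr (pY (k:ℝ) ((m:ℝ)+1) (fv q')),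
        memX s', memY q', by simpa only [prm] using h2, by simpa only [prm] using h1⟩

/-- For all `k ≥ 1` and `m ≥ 1` there exist sets `Ĉ_1, Ĉ_2 ⊆ ℝ`, each of size `2m`,
such that `ψ̂_k(Ĉ_1, Ĉ_2) ≥ m⁴`. -/
theorem exists_psiHatR_ge (k m : ℕ) (hk : 1 ≤ k) (hm : 1 ≤ m) :
    ∃ C₁ C₂ : Finset ℝ, C₁.card = 2 * m ∧ C₂.card = 2 * m ∧
      m ^ 4 ≤ psiHatR k C₁ C₂ := by
  refine ⟨C1 k m, C2 k m, card_C1 hk, card_C2 hk, ?_⟩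
  have h := psi_ge k (C1 k m) (C2 k m) (prm k m) (hinj_all k m hk hm) (hsep_all k m hk hm)
  have hcard : Fintype.card (Fin m × Fin m × Fin m × Fin m) = m ^ 4 := by
    simp only [Fintype.card_prod, Fintype.card_fin]
    ring
  rw [hcard] at h
  exact h
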